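/- Let (Ω, F, P) be a probability space and N, d_y, d_z ≥ 1. Let γ_1, …, γ_N > 0, ρ_1, …, ρ_N > 0, w ∈ ℝᴺ, y ∈ ℝ^{d_y}, and let Z¹, …, Zᴺ : Ω → ℝ^{d_y×d_z} be random matrices with E[‖Zⁱ‖_F²] < ∞. Let 𝐞_i = e_i ⊗ I_{d_y}, ê_i = e_i ⊗ I_{d_z}, 𝐰 = [w¹ I_{d_y}; …; wᴺ I_{d_y}] ∈ ℝ^{N d_y × d_y}, and 𝐙 = [𝐞_1 Z¹, …, 𝐞_N Zᴺ] : Ω → ℝ^{N d_y × N d_z}. For each i let P_i ∈ ℝ^{N d_y × N d_y} be symmetric and S_i ∈ ℝ^{N d_y}, and for β ∈ ℝ^{N d_z} with blocks βⁱ = ê_iᵀ β define J_i(β; ŷ) = E[ ρ_i (‖y − 𝐰ᵀ(ŷ + 𝐙β)‖² + γ_i ‖βⁱ‖²) + (ŷ + 𝐙β)ᵀ P_i (ŷ + 𝐙β) + 2 S_iᵀ (ŷ + 𝐙β) ]. Set Â = E[𝐙ᵀ 𝐰 𝐰ᵀ 𝐙], D = E[𝐙], and D_i = E[𝐙ᵀ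 P_i 𝐙]. Fix any matrix G ∈ ℝ^{N d_z × N d_y} and vector H ∈ ℝ^{N d_z}, and define P'_i = Gᵀ (ρ_i Â + D_i + ρ_i γ_i ê_i ê_iᵀ) G + (ρ_i 𝐰 𝐰ᵀ + P_i) D G + Gᵀ Dᵀ (ρ_i 𝐰 𝐰ᵀ + P_i)ᵀ + ρ_i 𝐰 𝐰ᵀ + P_i and S'_i = Gᵀ (ρ_i Â + D_i + ρ_i γ_i ê_i ê_iᵀ) H + (ρ_i 𝐰 𝐰ᵀ + P_i) D H + Gᵀ Dᵀ (S_i − ρ_i 𝐰 y) + S_i − ρ_i 𝐰 y. Then there exists a real constant r_i (independent of ŷ) such that for every ŷ ∈ ℝ^{N d_y}: J_i(G ŷ + H; ŷ) = ŷᵀ P'_i ŷ + 2 S'_iᵀ ŷ + r_i. -/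

import Mathlib

open MeasureTheory Matrix

/-!
Pointwise in `ω`, the one-step cost is `affineQuadratic A s v + const` in the next state
`v = ŷ + 𝐙β`, with `A = ρ_i 𝐰𝐰ᵀ + P_i` and `s = S_i − ρ_i 𝐰y`. Expanding around `ŷ` leaves one
term linear and one quadratic in `𝐙`, which the expectation turns into `D = E[𝐙]` and
`E[𝐙ᵀA𝐙] = ρ_i Â + D_i`; so `J_i(β; ŷ)` is a deterministic quadratic in `(ŷ, β)`. Substituting
`β = Gŷ + H` and collecting terms, using the symmetry of `A` and of
`ρ_i Â + D_i + ρ_i γ_i ê_iê_iᵀ`, gives `P'_i` and `S'_i`.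
-/

section AffineQuadratic

variable {R : Type*} [CommRing R] {n m : Type*} [Fintype n] [Fintype m]

def affineQuadratic (A : Matrix n n R) (s x : n → R) : R :=
  x ⬝ᵥ (A *ᵥ x) + 2 * (s ⬝ᵥ x)

theorem dotProduct_mulVec_eq_transpose_mulVec_dotProduct (u : n → R) (A : Matrix n m R)
    (v : m → R) : u ⬝ᵥ (A *ᵥ v) = (Aᵀ *ᵥ u) ⬝ᵥ v := by
  rw [dotProduct_mulVec, mulVec_transpose]

theorem dotProduct_mulVec_eq_sum_sum (u : n → R) (A : Matrix n m R)
    (v : m → R) : u ⬝ᵥ (A *ᵥ v) = ∑ a, ∑ b, u a * v b * A a b := by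
  simp only [dotProduct, mulVec, Finset.mul_sum]
  exact Finset.sum_congr rfl fun a _ => Finset.sum_congr rfl fun b _ => by ring

omit [Fintype m] in
theorem Matrix.IsSymm.transpose_mul_mul {A : Matrix n n R} (hA : A.IsSymm) (T : Matrix n m R) :
    (Tᵀ * A * T).IsSymm := by
  simp only [IsSymm, transpose_mul, transpose_transpose, hA.eq, Matrix.mul_assoc]

omit [Fintype n] in
theorem Matrix.isSymm_mul_transpose (B : Matrix n m R) : (B * Bᵀ).IsSymm := by
  simp only [IsSymm, transpose_mul, transpose_transpose]

theorem Matrix.IsSymm.affineQuadratic_add_mulVec {A : Matrix n n R} (hA : A.IsSymm)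
    (s t : n → R) (T : Matrix n m R) (b : m → R) :
    affineQuadratic A s (t + T *ᵥ b) =
      affineQuadratic A s t + 2 * ((A *ᵥ t + s) ⬝ᵥ (T *ᵥ b)) + b ⬝ᵥ ((Tᵀ * A * T) *ᵥ b) := by
  have hcross : t ⬝ᵥ (A *ᵥ (T *ᵥ b)) = (A *ᵥ t) ⬝ᵥ (T *ᵥ b) := by
    rw [dotProduct_mulVec_eq_transpose_mulVec_dotProduct, hA.eq]
  have hsquare : (T *ᵥ b) ⬝ᵥ (A *ᵥ (T *ᵥ b)) = b ⬝ᵥ ((Tᵀ * A * T) *ᵥ b) := by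
    rw [← mulVec_mulVec, ← mulVec_mulVec, dotProduct_mulVec_eq_transpose_mulVec_dotProduct b,
      transpose_transpose]
  simp only [affineQuadratic, mulVec_add, dotProduct_add, add_dotProduct, hcross, hsquare,
    dotProduct_comm (T *ᵥ b) (A *ᵥ t)]
  ring

theorem sum_sq_sub_transpose_mulVec {k : Type*} [Fintype k] (B : Matrix n k R) (y : k → R)
    (v : n → R) :
    ∑ j, (y j - (Bᵀ *ᵥ v) j) ^ 2 = y ⬝ᵥ y - 2 * ((B *ᵥ y) ⬝ᵥ v) + v ⬝ᵥ ((B * Bᵀ) *ᵥ v) := by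
  rw [← mulVec_mulVec, dotProduct_comm (B *ᵥ y),
    dotProduct_mulVec_eq_transpose_mulVec_dotProduct v B (Bᵀ *ᵥ v),
    dotProduct_mulVec_eq_transpose_mulVec_dotProduct v B y]
  simp only [dotProduct, Finset.mul_sum, ← Finset.sum_sub_distrib, ← Finset.sum_add_distrib]
  exact Finset.sum_congr rfl fun j _ => by ring

theorem tracking_cost_eq_affineQuadratic {k : Type*} [Fintype k] (ρ c : R) (B : Matrix n k R)
    (y : k → R) (Q : Matrix n n R) (S v : n → R) :
    ρ * (∑ j, (y j - (Bᵀ *ᵥ v) j) ^ 2 + c) + v ⬝ᵥ (Q *ᵥ v) + 2 * (S ⬝ᵥ v) =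
      affineQuadratic (ρ • (B * Bᵀ) + Q) (S - ρ • (B *ᵥ y)) v + ρ * (y ⬝ᵥ y + c) := by
  simp only [sum_sq_sub_transpose_mulVec, affineQuadratic, add_mulVec, smul_mulVec,
    dotProduct_add, dotProduct_smul, sub_dotProduct, smul_dotProduct, smul_eq_mul]
  ring

theorem sum_sq_eq_dotProduct_mulVec_of_selector [DecidableEq n] [DecidableEq m] {i : n}
    {E : Matrix (n × m) m R} (hE : E = of fun jp p => if jp.1 = i ∧ jp.2 = p then 1 else 0)
    (β : n × m → R) :
    ∑ p, β (i, p) ^ 2 = β ⬝ᵥ ((E * Eᵀ) *ᵥ β) := by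
  have hselect : Eᵀ *ᵥ β = fun p => β (i, p) := by
    funext p
    simp [hE, mulVec, dotProduct, ← Prod.mk.injEq]
  rw [← mulVec_mulVec, dotProduct_mulVec_eq_transpose_mulVec_dotProduct, hselect]
  simp only [dotProduct, sq]

theorem Matrix.IsSymm.affineQuadratic_affine_substitution
    {A : Matrix n n R} (hA : A.IsSymm) {M : Matrix m m R} (hM : M.IsSymm) (s : n → R)
    (D : Matrix n m R) (G : Matrix m n R) (H : m → R) (t : n → R) :
    affineQuadratic A s t + 2 * ((A *ᵥ t + s) ⬝ᵥ (D *ᵥ (G *ᵥ t + H))) +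
        (G *ᵥ t + H) ⬝ᵥ (M *ᵥ (G *ᵥ t + H)) =
      affineQuadratic (Gᵀ * M * G + A * D * G + Gᵀ * Dᵀ * Aᵀ + A)
          ((Gᵀ * M) *ᵥ H + (A * D) *ᵥ H + (Gᵀ * Dᵀ) *ᵥ s + s) t +
        (H ⬝ᵥ (M *ᵥ H) + 2 * (s ⬝ᵥ (D *ᵥ H))) := by
  have hMG : (G *ᵥ t) ⬝ᵥ (M *ᵥ (G *ᵥ t)) = t ⬝ᵥ ((Gᵀ * M * G) *ᵥ t) := by
    rw [Matrix.mul_assoc, ← mulVec_mulVec, ← mulVec_mulVec,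
      dotProduct_mulVec_eq_transpose_mulVec_dotProduct t, transpose_transpose]
  have hADG : (A *ᵥ t) ⬝ᵥ (D *ᵥ (G *ᵥ t)) = t ⬝ᵥ ((A * D * G) *ᵥ t) := by
    rw [Matrix.mul_assoc, ← mulVec_mulVec, ← mulVec_mulVec,
      dotProduct_mulVec_eq_transpose_mulVec_dotProduct t, hA.eq]
  have hGDA : (A *ᵥ t) ⬝ᵥ (D *ᵥ (G *ᵥ t)) = t ⬝ᵥ ((Gᵀ * Dᵀ * Aᵀ) *ᵥ t) := by
    rw [← mulVec_mulVec, ← mulVec_mulVec, dotProduct_comm,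
      dotProduct_mulVec_eq_transpose_mulVec_dotProduct t, transpose_transpose,
      dotProduct_mulVec_eq_transpose_mulVec_dotProduct (G *ᵥ t), transpose_transpose, hA.eq]
  have hAD : (A *ᵥ t) ⬝ᵥ (D *ᵥ H) = ((A * D) *ᵥ H) ⬝ᵥ t := by
    rw [dotProduct_comm, dotProduct_mulVec_eq_transpose_mulVec_dotProduct _ A, hA.eq,
      mulVec_mulVec]
  have hDG : s ⬝ᵥ (D *ᵥ (G *ᵥ t)) = ((Gᵀ * Dᵀ) *ᵥ s) ⬝ᵥ t := by
    rw [mulVec_mulVec, dotProduct_mulVec_eq_transpose_mulVec_dotProduct, transpose_mul]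
  have hGM : (G *ᵥ t) ⬝ᵥ (M *ᵥ H) = ((Gᵀ * M) *ᵥ H) ⬝ᵥ t := by
    rw [← mulVec_mulVec, dotProduct_comm, dotProduct_mulVec_eq_transpose_mulVec_dotProduct _ G]
  have hMG' : H ⬝ᵥ (M *ᵥ (G *ᵥ t)) = ((Gᵀ * M) *ᵥ H) ⬝ᵥ t := by
    rw [dotProduct_mulVec_eq_transpose_mulVec_dotProduct, hM.eq, ← hGM, dotProduct_comm]
  simp only [affineQuadratic, mulVec_add, add_mulVec, dotProduct_add, add_dotProduct, hMG, hDG,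
    hGM, hMG', hAD]
  linear_combination hADG + hGDA

end AffineQuadratic

section RandomMatrix

variable {Ω : Type*} [MeasurableSpace Ω] {n m : Type*} [Fintype n] [Fintype m]

noncomputable def matrixIntegral (P : Measure Ω) (F : Ω → Matrix n m ℝ) : Matrix n m ℝ :=
  Matrix.of fun a b => ∫ ω, F ω a b ∂P

variable {P : Measure Ω}

theorem integrable_dotProduct_mulVec {F : Ω → Matrix n m ℝ}
    (hF : ∀ a b, Integrable (fun ω => F ω a b) P) (u : n → ℝ) (v : m → ℝ) :
    Integrable (fun ω => u ⬝ᵥ (F ω *ᵥ v)) P := by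
  simp only [dotProduct_mulVec_eq_sum_sum]
  exact integrable_finsetSum _ fun a _ => integrable_finsetSum _ fun b _ => (hF a b).const_mul _

theorem integral_dotProduct_mulVec {F : Ω → Matrix n m ℝ}
    (hF : ∀ a b, Integrable (fun ω => F ω a b) P) (u : n → ℝ) (v : m → ℝ) :
    ∫ ω, u ⬝ᵥ (F ω *ᵥ v) ∂P = u ⬝ᵥ (matrixIntegral P F *ᵥ v) := by
  simp only [dotProduct_mulVec_eq_sum_sum, matrixIntegral, of_apply]
  rw [integral_finsetSum _ fun a _ =>
    integrable_finsetSum _ fun b _ => (hF a b).const_mul _]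
  refine Finset.sum_congr rfl fun a _ => ?_
  rw [integral_finsetSum _ fun b _ => (hF a b).const_mul _]
  exact Finset.sum_congr rfl fun b _ => integral_const_mul _ _

omit [Fintype n] [Fintype m] in
theorem isSymm_matrixIntegral {F : Ω → Matrix n n ℝ} (hF : ∀ ω, (F ω).IsSymm) :
    (matrixIntegral P F).IsSymm :=
  IsSymm.ext fun a b => by simp only [matrixIntegral, of_apply, (hF _).apply]

theorem memLp_two_apply_of_integrable_sum_sq {F : Ω → Matrix n m ℝ} {a : n} {b : m}
    (hmeas : AEStronglyMeasurable (fun ω => F ω a b) P)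
    (hint : Integrable (fun ω => ∑ a', ∑ b', F ω a' b' ^ 2) P) :
    MemLp (fun ω => F ω a b) 2 P := by
  refine (memLp_two_iff_integrable_sq hmeas).2
    (hint.mono' (hmeas.pow 2) (ae_of_all _ fun ω => ?_))
  rw [Real.norm_of_nonneg (sq_nonneg _)]
  calc F ω a b ^ 2 ≤ ∑ b', F ω a b' ^ 2 :=
        Finset.single_le_sum (fun _ _ => sq_nonneg _) (Finset.mem_univ b)
    _ ≤ ∑ a', ∑ b', F ω a' b' ^ 2 :=
        Finset.single_le_sum (f := fun a' => ∑ b', F ω a' b' ^ 2)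
          (fun _ _ => Finset.sum_nonneg fun _ _ => sq_nonneg _) (Finset.mem_univ a)

omit [Fintype n] [Fintype m] in
theorem memLp_blockDiagonal_apply {ι : Type*} [DecidableEq ι] {p : ENNReal}
    {Z : ι → Ω → Matrix n m ℝ} (hZ : ∀ j a b, MemLp (fun ω => Z j ω a b) p P)
    (a : ι × n) (b : ι × m) :
    MemLp (fun ω => (of fun jk jp => if jk.1 = jp.1 then Z jk.1 ω jk.2 jp.2 else 0 :
      Matrix (ι × n) (ι × m) ℝ) a b) p P := by
  by_cases hab : a.1 = b.1
  · simpa only [of_apply, hab, if_true] using hZ b.1 a.2 b.2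
  · simp only [of_apply, hab, if_false]
    exact MemLp.zero

omit [Fintype m] in
theorem integrable_transpose_mul_mul_apply {F : Ω → Matrix n m ℝ}
    (hF : ∀ a b, MemLp (fun ω => F ω a b) 2 P) (W : Matrix n n ℝ) (a b : m) :
    Integrable (fun ω => ((F ω)ᵀ * W * F ω) a b) P := by
  simp only [mul_apply, transpose_apply, Finset.sum_mul]
  refine integrable_finsetSum _ fun c _ => integrable_finsetSum _ fun d _ => ?_
  refine (((hF d a).integrable_mul (hF c b)).const_mul (W d c)).congr (ae_of_all _ fun ω => ?_)
  simp only [Pi.mul_apply]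
  ring

omit [Fintype m] in
theorem matrixIntegral_transpose_mul_smul_add_mul {F : Ω → Matrix n m ℝ}
    (hF : ∀ a b, MemLp (fun ω => F ω a b) 2 P) (ρ : ℝ) (W Q : Matrix n n ℝ) :
    matrixIntegral P (fun ω => (F ω)ᵀ * (ρ • W + Q) * F ω) =
      ρ • matrixIntegral P (fun ω => (F ω)ᵀ * W * F ω) +
        matrixIntegral P (fun ω => (F ω)ᵀ * Q * F ω) := by
  ext a b
  simp only [matrixIntegral, Matrix.mul_add, Matrix.add_mul, Matrix.mul_smul, Matrix.smul_mul,
    of_apply, Matrix.add_apply, Matrix.smul_apply, smul_eq_mul]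
  rw [integral_add ((integrable_transpose_mul_mul_apply hF W a b).const_mul ρ)
    (integrable_transpose_mul_mul_apply hF Q a b), integral_const_mul]

theorem integrable_affineQuadratic_add_mulVec [IsFiniteMeasure P] {A : Matrix n n ℝ}
    (hA : A.IsSymm) {T : Ω → Matrix n m ℝ} (hT : ∀ a b, MemLp (fun ω => T ω a b) 2 P)
    (s t : n → ℝ) (b : m → ℝ) :
    Integrable (fun ω => affineQuadratic A s (t + T ω *ᵥ b)) P := by
  have hT1 : ∀ a b, Integrable (fun ω => T ω a b) P := fun a b => (hT a b).integrable one_le_two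
  simp only [hA.affineQuadratic_add_mulVec]
  exact ((integrable_const _).add ((integrable_dotProduct_mulVec hT1 _ b).const_mul 2)).add
    (integrable_dotProduct_mulVec (integrable_transpose_mul_mul_apply hT A) b b)

theorem integral_affineQuadratic_add_mulVec [IsProbabilityMeasure P] {A : Matrix n n ℝ}
    (hA : A.IsSymm) {T : Ω → Matrix n m ℝ} (hT : ∀ a b, MemLp (fun ω => T ω a b) 2 P)
    (s t : n → ℝ) (b : m → ℝ) :
    ∫ ω, affineQuadratic A s (t + T ω *ᵥ b) ∂P =
      affineQuadratic A s t + 2 * ((A *ᵥ t + s) ⬝ᵥ (matrixIntegral P T *ᵥ b)) +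
        b ⬝ᵥ (matrixIntegral P (fun ω => (T ω)ᵀ * A * T ω) *ᵥ b) := by
  have hT1 : ∀ a b, Integrable (fun ω => T ω a b) P := fun a b => (hT a b).integrable one_le_two
  have hlin : Integrable (fun ω => 2 * ((A *ᵥ t + s) ⬝ᵥ (T ω *ᵥ b))) P :=
    (integrable_dotProduct_mulVec hT1 _ b).const_mul 2
  have hquad : Integrable (fun ω => b ⬝ᵥ (((T ω)ᵀ * A * T ω) *ᵥ b)) P :=
    integrable_dotProduct_mulVec (integrable_transpose_mul_mul_apply hT A) b b
  have hconst_lin : Integrable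
      (fun ω => affineQuadratic A s t + 2 * ((A *ᵥ t + s) ⬝ᵥ (T ω *ᵥ b))) P :=
    (integrable_const _).add hlin
  simp only [hA.affineQuadratic_add_mulVec]
  rw [integral_add hconst_lin hquad, integral_add (integrable_const _) hlin,
    integral_const, integral_const_mul, integral_dotProduct_mulVec hT1,
    integral_dotProduct_mulVec (integrable_transpose_mul_mul_apply hT A), probReal_univ, one_smul]

end RandomMatrix

theorem one_step_cost_affine_quadratic_in_state_general
    {Ω : Type*} [MeasurableSpace Ω] (P : Measure Ω) [IsProbabilityMeasure P]
    (N dy dz : ℕ)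
    (γ ρ : Fin N → ℝ)
    (y : Fin dy → ℝ)
    (Z : Fin N → Ω → Matrix (Fin dy) (Fin dz) ℝ)
    (hZmeas : ∀ i k p, Measurable fun ω => Z i ω k p)
    (hZint : ∀ i, Integrable (fun ω => ∑ k, ∑ p, (Z i ω k p) ^ 2) P)
    (Pm : Fin N → Matrix (Fin N × Fin dy) (Fin N × Fin dy) ℝ)
    (hPm : ∀ i, (Pm i).IsSymm)
    (S : Fin N → (Fin N × Fin dy → ℝ))
    -- the embedding matrices ê_i = e_i ⊗ I_{d_z}
    (embz : Fin N → Matrix (Fin N × Fin dz) (Fin dz) ℝ)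
    (hembz : ∀ i, embz i =
      Matrix.of fun jp p' => if jp.1 = i ∧ jp.2 = p' then (1 : ℝ) else 0)
    -- 𝐰 = [w¹ I_{d_y}; …; wᴺ I_{d_y}]
    (bw : Matrix (Fin N × Fin dy) (Fin dy) ℝ)
    -- 𝐙 = [𝐞_1 Z¹, …, 𝐞_N Zᴺ]
    (bZ : Ω → Matrix (Fin N × Fin dy) (Fin N × Fin dz) ℝ)
    (hbZ : ∀ ω, bZ ω =
      Matrix.of fun jk jp => if jk.1 = jp.1 then Z jk.1 ω jk.2 jp.2 else 0)
    -- the cost functions J_i(β; ŷ)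
    (J : (Fin N × Fin dz → ℝ) → (Fin N × Fin dy → ℝ) → Fin N → ℝ)
    (hJ : ∀ β yhat i, J β yhat i =
      ∫ ω,
        (ρ i * ((∑ k', (y k' - (bwᵀ *ᵥ (yhat + bZ ω *ᵥ β)) k') ^ 2) +
            γ i * ∑ p, (β (i, p)) ^ 2) +
          (yhat + bZ ω *ᵥ β) ⬝ᵥ (Pm i *ᵥ (yhat + bZ ω *ᵥ β)) +
          2 * (S i ⬝ᵥ (yhat + bZ ω *ᵥ β))) ∂P)
    -- Â = E[𝐙ᵀ𝐰𝐰ᵀ𝐙], D = E[𝐙], D_i = E[𝐙ᵀ P_i 𝐙]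
    (Ahat : Matrix (Fin N × Fin dz) (Fin N × Fin dz) ℝ)
    (hAhat : Ahat = Matrix.of fun ip jq =>
      ∫ ω, ((bZ ω)ᵀ * bw * bwᵀ * bZ ω) ip jq ∂P)
    (D : Matrix (Fin N × Fin dy) (Fin N × Fin dz) ℝ)
    (hD : D = Matrix.of fun jk jp => ∫ ω, bZ ω jk jp ∂P)
    (Di : Fin N → Matrix (Fin N × Fin dz) (Fin N × Fin dz) ℝ)
    (hDi : ∀ i, Di i = Matrix.of fun ip jq =>
      ∫ ω, ((bZ ω)ᵀ * Pm i * bZ ω) ip jq ∂P)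
    -- an arbitrary affine feedback strategy β = Gŷ + H
    (G : Matrix (Fin N × Fin dz) (Fin N × Fin dy) ℝ)
    (H : Fin N × Fin dz → ℝ)
    -- the Riccati-type updates
    (P' : Fin N → Matrix (Fin N × Fin dy) (Fin N × Fin dy) ℝ)
    (hP' : ∀ i, P' i =
      Gᵀ * (ρ i • Ahat + Di i + (ρ i * γ i) • (embz i * (embz i)ᵀ)) * G +
        (ρ i • (bw * bwᵀ) + Pm i) * D * G +
        Gᵀ * Dᵀ * (ρ i • (bw * bwᵀ) + Pm i)ᵀ +
        ρ i • (bw * bwᵀ) + Pm i)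
    (S' : Fin N → (Fin N × Fin dy → ℝ))
    (hS' : ∀ i, S' i =
      (Gᵀ * (ρ i • Ahat + Di i + (ρ i * γ i) • (embz i * (embz i)ᵀ))) *ᵥ H +
        ((ρ i • (bw * bwᵀ) + Pm i) * D) *ᵥ H +
        (Gᵀ * Dᵀ) *ᵥ (S i - ρ i • (bw *ᵥ y)) +
        (S i - ρ i • (bw *ᵥ y))) :
    ∀ i : Fin N, ∃ r : ℝ, ∀ yhat : Fin N × Fin dy → ℝ,
      J (G *ᵥ yhat + H) yhat i =
        yhat ⬝ᵥ (P' i *ᵥ yhat) + 2 * (S' i ⬝ᵥ yhat) + r := by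
  intro i
  have hbZ_memLp : ∀ a b, MemLp (fun ω => bZ ω a b) 2 P := by
    simp only [hbZ]
    exact memLp_blockDiagonal_apply fun j a b =>
      memLp_two_apply_of_integrable_sum_sq (hZmeas j a b).aestronglyMeasurable (hZint j)
  set A := ρ i • (bw * bwᵀ) + Pm i
  set s := S i - ρ i • (bw *ᵥ y)
  set M := ρ i • Ahat + Di i + (ρ i * γ i) • (embz i * (embz i)ᵀ)
  have hA : A.IsSymm := ((isSymm_mul_transpose bw).smul _).add (hPm i)
  have hZAZ : matrixIntegral P (fun ω => (bZ ω)ᵀ * A * bZ ω) = ρ i • Ahat + Di i := by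
    rw [matrixIntegral_transpose_mul_smul_add_mul hbZ_memLp, hAhat, hDi]
    simp only [matrixIntegral, Matrix.mul_assoc]
  have hM : M.IsSymm := by
    simp only [M, ← hZAZ]
    exact (isSymm_matrixIntegral fun ω => hA.transpose_mul_mul _).add
      ((isSymm_mul_transpose _).smul _)
  have hcost : ∀ β t, J β t i = affineQuadratic A s t + 2 * ((A *ᵥ t + s) ⬝ᵥ (D *ᵥ β)) +
      β ⬝ᵥ (M *ᵥ β) + ρ i * (y ⬝ᵥ y) := by
    intro β t
    simp only [hJ, tracking_cost_eq_affineQuadratic]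
    rw [integral_add (integrable_affineQuadratic_add_mulVec hA hbZ_memLp s t β) (integrable_const _),
      integral_affineQuadratic_add_mulVec hA hbZ_memLp, hZAZ, show matrixIntegral P bZ = D from hD.symm,
      integral_const, probReal_univ, one_smul, sum_sq_eq_dotProduct_mulVec_of_selector (hembz i)]
    simp only [M, add_mulVec, smul_mulVec, dotProduct_add, dotProduct_smul, smul_eq_mul]
    ring
  refine ⟨H ⬝ᵥ (M *ᵥ H) + 2 * (s ⬝ᵥ (D *ᵥ H)) + ρ i * (y ⬝ᵥ y), fun t => ?_⟩
  have hP'i : P' i = Gᵀ * M * G + A * D * G + Gᵀ * Dᵀ * Aᵀ + A := by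
    rw [hP' i, add_assoc]
  have hS'i : S' i = (Gᵀ * M) *ᵥ H + (A * D) *ᵥ H + (Gᵀ * Dᵀ) *ᵥ s + s := hS' i
  rw [hcost, hA.affineQuadratic_affine_substitution hM, ← hP'i, ← hS'i,
    affineQuadratic]
  ring

set_option maxHeartbeats 1000000 in
/-- **Matching of coefficients in the backward induction** for the feedback Nash
equilibrium: substituting an affine feedback strategy `β = Gŷ + H` into the one-step
cost `J_i(β; ŷ) = E[ρ_i(‖y − 𝐰ᵀ(ŷ + 𝐙β)‖² + γ_i‖βⁱ‖²) + (ŷ+𝐙β)ᵀP_i(ŷ+𝐙β) + 2S_iᵀ(ŷ+𝐙β)]`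
yields again an affine-quadratic function of the state:
`J_i(Gŷ + H; ŷ) = ŷᵀP'_iŷ + 2S'_iᵀŷ + r_i`, where `P'_i` and `S'_i` are the displayed
Riccati-type updates built from `Â = E[𝐙ᵀ𝐰𝐰ᵀ𝐙]`, `D = E[𝐙]` and `D_i = E[𝐙ᵀP_i𝐙]`. -/
theorem one_step_cost_affine_quadratic_in_state
    {Ω : Type*} [MeasurableSpace Ω] (P : Measure Ω) [IsProbabilityMeasure P]
    (N dy dz : ℕ) (hN : 1 ≤ N) (hdy : 1 ≤ dy) (hdz : 1 ≤ dz)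
    (γ ρ : Fin N → ℝ) (hγ : ∀ i, 0 < γ i) (hρ : ∀ i, 0 < ρ i)
    (w : Fin N → ℝ) (y : Fin dy → ℝ)
    (Z : Fin N → Ω → Matrix (Fin dy) (Fin dz) ℝ)
    (hZmeas : ∀ i k p, Measurable fun ω => Z i ω k p)
    (hZint : ∀ i, Integrable (fun ω => ∑ k, ∑ p, (Z i ω k p) ^ 2) P)
    (Pm : Fin N → Matrix (Fin N × Fin dy) (Fin N × Fin dy) ℝ)
    (hPm : ∀ i, (Pm i).IsSymm)
    (S : Fin N → (Fin N × Fin dy → ℝ))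
    -- the embedding matrices ê_i = e_i ⊗ I_{d_z}
    (embz : Fin N → Matrix (Fin N × Fin dz) (Fin dz) ℝ)
    (hembz : ∀ i, embz i =
      Matrix.of fun jp p' => if jp.1 = i ∧ jp.2 = p' then (1 : ℝ) else 0)
    -- 𝐰 = [w¹ I_{d_y}; …; wᴺ I_{d_y}]
    (bw : Matrix (Fin N × Fin dy) (Fin dy) ℝ)
    (hbw : bw = Matrix.of fun jk k' => if jk.2 = k' then w jk.1 else 0)
    -- 𝐙 = [𝐞_1 Z¹, …, 𝐞_N Zᴺ]
    (bZ : Ω → Matrix (Fin N × Fin dy) (Fin N × Fin dz) ℝ)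
    (hbZ : ∀ ω, bZ ω =
      Matrix.of fun jk jp => if jk.1 = jp.1 then Z jk.1 ω jk.2 jp.2 else 0)
    -- the cost functions J_i(β; ŷ)
    (J : (Fin N × Fin dz → ℝ) → (Fin N × Fin dy → ℝ) → Fin N → ℝ)
    (hJ : ∀ β yhat i, J β yhat i =
      ∫ ω,
        (ρ i * ((∑ k', (y k' - (bwᵀ *ᵥ (yhat + bZ ω *ᵥ β)) k') ^ 2) +
            γ i * ∑ p, (β (i, p)) ^ 2) +
          (yhat + bZ ω *ᵥ β) ⬝ᵥ (Pm i *ᵥ (yhat + bZ ω *ᵥ β)) +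
          2 * (S i ⬝ᵥ (yhat + bZ ω *ᵥ β))) ∂P)
    -- Â = E[𝐙ᵀ𝐰𝐰ᵀ𝐙], D = E[𝐙], D_i = E[𝐙ᵀ P_i 𝐙]
    (Ahat : Matrix (Fin N × Fin dz) (Fin N × Fin dz) ℝ)
    (hAhat : Ahat = Matrix.of fun ip jq =>
      ∫ ω, ((bZ ω)ᵀ * bw * bwᵀ * bZ ω) ip jq ∂P)
    (D : Matrix (Fin N × Fin dy) (Fin N × Fin dz) ℝ)
    (hD : D = Matrix.of fun jk jp => ∫ ω, bZ ω jk jp ∂P)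
    (Di : Fin N → Matrix (Fin N × Fin dz) (Fin N × Fin dz) ℝ)
    (hDi : ∀ i, Di i = Matrix.of fun ip jq =>
      ∫ ω, ((bZ ω)ᵀ * Pm i * bZ ω) ip jq ∂P)
    -- an arbitrary affine feedback strategy β = Gŷ + H
    (G : Matrix (Fin N × Fin dz) (Fin N × Fin dy) ℝ)
    (H : Fin N × Fin dz → ℝ)
    -- the Riccati-type updates
    (P' : Fin N → Matrix (Fin N × Fin dy) (Fin N × Fin dy) ℝ)
    (hP' : ∀ i, P' i =
      Gᵀ * (ρ i • Ahat + Di i + (ρ i * γ i) • (embz i * (embz i)ᵀ)) * G +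
        (ρ i • (bw * bwᵀ) + Pm i) * D * G +
        Gᵀ * Dᵀ * (ρ i • (bw * bwᵀ) + Pm i)ᵀ +
        ρ i • (bw * bwᵀ) + Pm i)
    (S' : Fin N → (Fin N × Fin dy → ℝ))
    (hS' : ∀ i, S' i =
      (Gᵀ * (ρ i • Ahat + Di i + (ρ i * γ i) • (embz i * (embz i)ᵀ))) *ᵥ H +
        ((ρ i • (bw * bwᵀ) + Pm i) * D) *ᵥ H +
        (Gᵀ * Dᵀ) *ᵥ (S i - ρ i • (bw *ᵥ y)) +
        (S i - ρ i • (bw *ᵥ y))) :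
    ∀ i : Fin N, ∃ r : ℝ, ∀ yhat : Fin N × Fin dy → ℝ,
      J (G *ᵥ yhat + H) yhat i =
        yhat ⬝ᵥ (P' i *ᵥ yhat) + 2 * (S' i ⬝ᵥ yhat) + r :=
  one_step_cost_affine_quadratic_in_state_general P N dy dz γ ρ y Z hZmeas hZint Pm hPm S embz hembz
    bw bZ hbZ J hJ Ahat hAhat D hD Di hDi G H P' hP' S' hS'
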